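/- arXiv:1904.13185 — 5 statements merged into one kernel-verified Lean document; each statement's English description precedes it below -/
import Mathlib

section
/- Let S : ℝ → ℝ be continuous with M(x) := sup_{y ≤ x} S(y) finite for all x. If [u, v] is an interval on which S(z) < M(z) for all z ∈ (u, v], then M is constant on [u, v] and the increments of TS are the negatives of those of S: for x, y ∈ [u, v], TS(x) − TS(y) = S(y) − S(x). -/
/-! If `pastMax S` rose above `pastMax S u` somewhere in `[u, x]`, the maximum of `S` on
`[u, x]`, attained by continuity, would exceed `pastMax S u`; so it would be attained at some
`z ∈ (u, x]`, where then `S z = pastMax S z`. Once `pastMax S` is constant, its terms cancel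
in the increments of `pitman S`. -/

noncomputable def pastMax (S : ℝ → ℝ) (x : ℝ) : ℝ := sSup (S '' Set.Iic x)

noncomputable def pitman (S : ℝ → ℝ) (x : ℝ) : ℝ :=
  2 * pastMax S x - S x - 2 * pastMax S 0

section PastMax

variable {S : ℝ → ℝ} {u x y z : ℝ}

theorem le_pastMax (hB : BddAbove (S '' Set.Iic x)) (hyx : y ≤ x) : S y ≤ pastMax S x :=
  le_csSup hB ⟨y, hyx, rfl⟩

theorem pastMax_mono (hB : ∀ x, BddAbove (S '' Set.Iic x)) : Monotone (pastMax S) :=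
  fun _ b hab => csSup_le_csSup (hB b) (Set.nonempty_Iic.image S)
    (Set.image_mono (Set.Iic_subset_Iic.mpr hab))

theorem pastMax_le_max_of_isMaxOn (hB : BddAbove (S '' Set.Iic u))
    (hz : IsMaxOn S (Set.Icc u x) z) : pastMax S x ≤ max (pastMax S u) (S z) := by
  refine csSup_le (Set.nonempty_Iic.image S) ?_
  rintro _ ⟨y, hyx, rfl⟩
  rcases le_or_gt y u with hyu | hyu
  · exact le_max_of_le_left (le_pastMax hB hyu)
  · exact le_max_of_le_right (hz ⟨hyu.le, hyx⟩)

theorem exists_mem_Ioc_pastMax_le_of_pastMax_lt (hS : ContinuousOn S (Set.Icc u x))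
    (hB : BddAbove (S '' Set.Iic u)) (hux : u ≤ x) (hlt : pastMax S u < pastMax S x) :
    ∃ z ∈ Set.Ioc u x, pastMax S x ≤ S z := by
  obtain ⟨z, ⟨huz, hzx⟩, hz⟩ :=
    isCompact_Icc.exists_isMaxOn (Set.nonempty_Icc.mpr hux) hS
  have hSz : pastMax S x ≤ S z :=
    (le_max_iff.mp (pastMax_le_max_of_isMaxOn hB hz)).resolve_left hlt.not_ge
  refine ⟨z, ⟨huz.lt_of_ne ?_, hzx⟩, hSz⟩
  rintro rfl
  exact hlt.not_ge (hSz.trans (le_pastMax hB le_rfl))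

theorem pastMax_eq_of_lt_pastMax_on_Ioc {v : ℝ} (hS : ContinuousOn S (Set.Icc u v))
    (hB : ∀ x, BddAbove (S '' Set.Iic x)) (h : ∀ z ∈ Set.Ioc u v, S z < pastMax S z) :
    ∀ x ∈ Set.Icc u v, pastMax S x = pastMax S u := by
  rintro x ⟨hux, hxv⟩
  refine le_antisymm (not_lt.mp fun hlt => ?_) (pastMax_mono hB hux)
  obtain ⟨z, ⟨huz, hzx⟩, hSz⟩ :=
    exists_mem_Ioc_pastMax_le_of_pastMax_lt
      (hS.mono (Set.Icc_subset_Icc_right hxv)) (hB u) hux hlt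
  exact (h z ⟨huz, hzx.trans hxv⟩).not_ge ((pastMax_mono hB hzx).trans hSz)

theorem pitman_sub_pitman_of_pastMax_eq (h : pastMax S x = pastMax S y) :
    pitman S x - pitman S y = S y - S x := by
  unfold pitman
  rw [h]
  ring

end PastMax

theorem pitman_increments_below_max_general (S : ℝ → ℝ) (hS : Continuous S)
    (hB : ∀ x : ℝ, BddAbove (S '' Set.Iic x))
    (u v : ℝ)
    (h : ∀ z ∈ Set.Ioc u v, S z < pastMax S z) :
    (∀ x ∈ Set.Icc u v, pastMax S x = pastMax S u) ∧
    (∀ x ∈ Set.Icc u v, ∀ y ∈ Set.Icc u v,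
      pitman S x - pitman S y = S y - S x) := by
  have hconst := pastMax_eq_of_lt_pastMax_on_Ioc hS.continuousOn hB h
  exact ⟨hconst, fun x hx y hy =>
    pitman_sub_pitman_of_pastMax_eq ((hconst x hx).trans (hconst y hy).symm)⟩

theorem pitman_increments_below_max (S : ℝ → ℝ) (hS : Continuous S)
    (hB : ∀ x : ℝ, BddAbove (S '' Set.Iic x))
    (u v : ℝ) (huv : u ≤ v)
    (h : ∀ z ∈ Set.Ioc u v, S z < pastMax S z) :
    (∀ x ∈ Set.Icc u v, pastMax S x = pastMax S u) ∧
    (∀ x ∈ Set.Icc u v, ∀ y ∈ Set.Icc u v,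
      pitman S x - pitman S y = S y - S x) :=
  pitman_increments_below_max_general S hS hB u v h
end

section
/- Let N ∈ ℕ, L > 0, and let ((Q_n)_{n∈ℤ}, (E_n)_{n∈ℤ}) be N-periodic sequences of positive reals with Σ_{n=1}^N(Q_n+E_n) = L and Σ_{n=1}^N Q_n < L/2. Let S be the bi-infinite path encoding with local maxima at a_n and local minima at b_n, and M(x) = sup_{y≤x} S(y). Define D_n := min_{0 ≤ k ≤ N−1} Σ_{ℓ=1}^k (E_{n−ℓ} − Q_{n−ℓ}). Then for every n ∈ ℤ: b_n − a_n − D_n = M(b_n) − S(b_n). Equivalently, Q_n − D_n = M(b_n) − S(b_n). -/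
/-- `D_n = min_{0 ≤ k ≤ N-1} ∑_{ℓ=1}^k (E_{n-ℓ} - Q_{n-ℓ})`. -/
noncomputable def Dfun (N : ℕ) (Q E : ℤ → ℝ) (n : ℤ) : ℝ :=
  sInf {s : ℝ | ∃ k : ℕ, k < N ∧
    s = ∑ ℓ ∈ Finset.Icc (1:ℤ) (k:ℤ), (E (n - ℓ) - Q (n - ℓ))}

/-!
Along the lattice `S (a (n + 1)) = S (a n) + (E n - Q n)`. The increments are `N`-periodic, so
one period shifts `a` by `L` and `S ∘ a` by `∑ (E - Q) = L - 2 ∑ Q > 0`. Every point left of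
`b n` lies below an earlier peak `a m`, and because of this upward drift `S (a m)` is at most
the value at the peak `a (n - k)`, `k < N`, congruent to `m` mod `N`. So `M (b n)` is the
maximum over `k < N` of `S (a (n - k)) = S (a n) - ∑_{ℓ=1}^k (E (n - ℓ) - Q (n - ℓ))`, that is
`S (a n) - D n`, while `S (b n) = S (a n) - Q n`.
-/

open Finset

lemma sum_Icc_one_natCast_succ {M : Type*} [AddCommMonoid M] (f : ℤ → M) (k : ℕ) :
    ∑ ℓ ∈ Icc (1 : ℤ) ↑(k + 1), f ℓ = ∑ ℓ ∈ Icc (1 : ℤ) k, f ℓ + f (k + 1) := by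
  rw [Nat.cast_succ, ← Finset.insert_Icc_right_eq_Icc_add_one (by omega),
    sum_insert (by simp), add_comm]

lemma sub_natCast_eq_sub_sum_Icc {M : Type*} [AddCommGroup M] {f d : ℤ → M}
    (hf : ∀ m, f (m + 1) = f m + d m) (n : ℤ) (k : ℕ) :
    f (n - k) = f n - ∑ ℓ ∈ Icc (1 : ℤ) k, d (n - ℓ) := by
  induction k with
  | zero => simp
  | succ k ih =>
    have step := hf (n - (k + 1))
    rw [show n - (k + 1) + 1 = n - k by ring, ih] at step
    rw [sum_Icc_one_natCast_succ, Nat.cast_succ, ← sub_sub (f n), step]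
    abel

lemma add_period_eq_add_sum_Icc {M : Type*} [AddCommGroup M] {f d : ℤ → M}
    (hf : ∀ m, f (m + 1) = f m + d m) {N : ℕ} (hd : Function.Periodic d N) (m : ℤ) :
    f (m + N) = f m + ∑ ℓ ∈ Icc (1 : ℤ) N, d ℓ := by
  have hjump : Function.Periodic (fun m => f (m + N) - f m) 1 := fun m => by
    simp only [add_right_comm m 1, hf, hd m]
    abel
  have hjump_eq : f (m + N) - f m = f (1 + N) - f 1 := by
    simpa using (hjump.int_mul_eq m).trans (hjump.int_mul_eq 1).symm
  have hreflect : ∑ ℓ ∈ Icc (1 : ℤ) N, d (N + 1 - ℓ) = ∑ ℓ ∈ Icc (1 : ℤ) N, d ℓ :=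
    sum_nbij' (fun ℓ => N + 1 - ℓ) (fun ℓ => N + 1 - ℓ) (by simp; omega) (by simp; omega)
      (by simp) (by simp) (by simp)
  have hone := sub_natCast_eq_sub_sum_Icc hf (N + 1) N
  rw [add_sub_cancel_left, hreflect, add_comm] at hone
  rw [← sub_eq_iff_eq_add', hjump_eq, hone, sub_sub_cancel]

lemma add_natCast_mul_eq_add_nsmul {M : Type*} [AddMonoid M] {f : ℤ → M} {N : ℤ} {c : M}
    (hf : ∀ m, f (m + N) = f m + c) (m : ℤ) (k : ℕ) : f (m + k * N) = f m + k • c := by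
  induction k with
  | zero => simp
  | succ k ih => rw [Nat.cast_succ, add_one_mul, ← add_assoc, hf, ih, succ_nsmul, add_assoc]

lemma Int.exists_le_and_lt_succ_of_le_of_lt {α : Type*} [LinearOrder α] {a : ℤ → α} {y : α}
    {p q : ℤ} (hpq : p ≤ q) (hp : a p ≤ y) (hq : y < a q) :
    ∃ m, p ≤ m ∧ m < q ∧ a m ≤ y ∧ y < a (m + 1) := by
  induction q, hpq using Int.leInduction with
  | base => exact absurd hq (not_lt.mpr hp)
  | succ q hpq ih =>
    by_cases hqy : a q ≤ y
    · exact ⟨q, hpq, lt_add_one q, hqy, hq⟩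
    · obtain ⟨m, hpm, hmq, hm⟩ := ih (lt_of_not_ge hqy)
      exact ⟨m, hpm, hmq.trans (lt_add_one q), hm⟩

lemma Int.exists_sub_natCast_eq_add_mul {N : ℕ} (hN : 0 < N) {m n : ℤ} (hmn : m ≤ n) :
    ∃ k j : ℕ, k < N ∧ n - k = m + j * N := by
  obtain ⟨d, rfl⟩ := Int.le.dest hmn
  refine ⟨d % N, d / N, Nat.mod_lt d hN, ?_⟩
  have := Nat.mod_add_div d N
  zify at this
  push_cast
  linarith

lemma isLeast_Dfun {N : ℕ} (hN : 0 < N) (Q E : ℤ → ℝ) (n : ℤ) :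
    IsLeast {s : ℝ | ∃ k : ℕ, k < N ∧
      s = ∑ ℓ ∈ Icc (1 : ℤ) k, (E (n - ℓ) - Q (n - ℓ))} (Dfun N Q E n) := by
  set g : ℕ → ℝ := fun k => ∑ ℓ ∈ Icc (1 : ℤ) k, (E (n - ℓ) - Q (n - ℓ))
  have hfin : {s : ℝ | ∃ k : ℕ, k < N ∧ s = g k}.Finite :=
    ((Set.finite_Iio N).image g).subset (by rintro _ ⟨k, hk, rfl⟩; exact ⟨k, hk, rfl⟩)
  exact ⟨Set.Nonempty.csInf_mem ⟨g 0, 0, hN, rfl⟩ hfin, fun s hs => csInf_le hfin.bddBelow hs⟩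

structure IsZigzagPath (Q E a b : ℤ → ℝ) (S : ℝ → ℝ) : Prop where
  Q_pos : ∀ n, 0 < Q n
  E_pos : ∀ n, 0 < E n
  b_eq : ∀ n, b n = a n + Q n
  a_succ : ∀ n, a (n + 1) = b n + E n
  down : ∀ n, ∀ x ∈ Set.Icc (a n) (b n), S x = S (a n) - (x - a n)
  up : ∀ n, ∀ x ∈ Set.Icc (b n) (a (n + 1)), S x = S (b n) + (x - b n)

namespace IsZigzagPath

variable {Q E a b : ℤ → ℝ} {S : ℝ → ℝ}

lemma a_lt_b (h : IsZigzagPath Q E a b S) (n : ℤ) : a n < b n := by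
  linarith [h.b_eq n, h.Q_pos n]

lemma b_lt_a_succ (h : IsZigzagPath Q E a b S) (n : ℤ) : b n < a (n + 1) := by
  linarith [h.a_succ n, h.E_pos n]

lemma a_succ_eq (h : IsZigzagPath Q E a b S) (n : ℤ) : a (n + 1) = a n + (Q n + E n) := by
  rw [h.a_succ, h.b_eq, add_assoc]

lemma monotone_a (h : IsZigzagPath Q E a b S) : Monotone a :=
  monotone_int_of_le_succ fun n => ((h.a_lt_b n).trans (h.b_lt_a_succ n)).le

lemma S_b (h : IsZigzagPath Q E a b S) (n : ℤ) : S (b n) = S (a n) - Q n := by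
  rw [h.down n (b n) ⟨(h.a_lt_b n).le, le_rfl⟩, h.b_eq, add_sub_cancel_left]

lemma S_a_succ_eq_S_b (h : IsZigzagPath Q E a b S) (n : ℤ) : S (a (n + 1)) = S (b n) + E n := by
  rw [h.up n (a (n + 1)) ⟨(h.b_lt_a_succ n).le, le_rfl⟩, h.a_succ, add_sub_cancel_left]

lemma S_a_succ (h : IsZigzagPath Q E a b S) (n : ℤ) :
    S (a (n + 1)) = S (a n) + (E n - Q n) := by
  rw [h.S_a_succ_eq_S_b, h.S_b]
  ring

lemma S_le_S_a (h : IsZigzagPath Q E a b S) {n : ℤ} {x : ℝ} (hx : x ∈ Set.Icc (a n) (b n)) :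
    S x ≤ S (a n) := by
  linarith [h.down n x hx, hx.1]

lemma S_le_S_a_succ (h : IsZigzagPath Q E a b S) {n : ℤ} {x : ℝ}
    (hx : x ∈ Set.Icc (b n) (a (n + 1))) : S x ≤ S (a (n + 1)) := by
  linarith [h.up n x hx, hx.2, h.S_a_succ_eq_S_b n, h.a_succ n]

lemma exists_S_le_S_a (h : IsZigzagPath Q E a b S) {n p : ℤ} {y : ℝ} (hpn : p ≤ n)
    (hpy : a p ≤ y) (hyn : y ≤ b n) : ∃ m ≤ n, S y ≤ S (a m) := by
  obtain ⟨m, -, hmn, hmy, hym⟩ := Int.exists_le_and_lt_succ_of_le_of_lt (by omega) hpy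
    (hyn.trans_lt (h.b_lt_a_succ n))
  rcases le_or_gt y (b m) with hyb | hby
  · exact ⟨m, by omega, h.S_le_S_a ⟨hmy, hyb⟩⟩
  · refine ⟨m + 1, ?_, h.S_le_S_a_succ ⟨hby.le, hym.le⟩⟩
    by_contra! hnm
    obtain rfl : m = n := by omega
    exact hby.not_ge hyn

lemma isGreatest_S_image_Iic_b (h : IsZigzagPath Q E a b S) {N : ℕ} (hN : 0 < N) {L c : ℝ}
    (hL : 0 < L) (hc : 0 ≤ c) (hperiod_a : ∀ m, a (m + N) = a m + L)
    (hperiod_S : ∀ m, S (a (m + N)) = S (a m) + c) (n : ℤ) :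
    IsGreatest (S '' Set.Iic (b n)) (S (a n) - Dfun N Q E n) := by
  obtain ⟨⟨k₀, -, hDk₀⟩, hD_le⟩ := isLeast_Dfun hN Q E n
  have hS_sub (k : ℕ) :
      S (a (n - k)) = S (a n) - ∑ ℓ ∈ Icc (1 : ℤ) k, (E (n - ℓ) - Q (n - ℓ)) :=
    sub_natCast_eq_sub_sum_Icc (f := fun m => S (a m)) h.S_a_succ n k
  refine ⟨⟨a (n - k₀), (h.monotone_a (by omega)).trans (h.a_lt_b n).le, by rw [hS_sub, hDk₀]⟩, ?_⟩
  rintro _ ⟨y, hy, rfl⟩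
  obtain ⟨j, hj⟩ := Archimedean.arch (a n - y) hL
  have hpy : a (n - j * N) ≤ y := by
    have := add_natCast_mul_eq_add_nsmul hperiod_a (n - j * N) j
    rw [sub_add_cancel] at this
    linarith
  obtain ⟨m, hmn, hym⟩ := h.exists_S_le_S_a (sub_le_self n (by positivity)) hpy hy
  obtain ⟨k, i, hk, hki⟩ := Int.exists_sub_natCast_eq_add_mul hN hmn
  calc S y ≤ S (a m) := hym
    _ ≤ S (a (m + i * N)) := by
      rw [add_natCast_mul_eq_add_nsmul (f := fun m => S (a m)) hperiod_S]
      exact le_add_of_nonneg_right (nsmul_nonneg hc i)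
    _ = S (a n) - ∑ ℓ ∈ Icc (1 : ℤ) k, (E (n - ℓ) - Q (n - ℓ)) := by rw [← hki, hS_sub]
    _ ≤ S (a n) - Dfun N Q E n := sub_le_sub_left (hD_le ⟨k, hk, rfl⟩) _

end IsZigzagPath

theorem periodic_carrier_identity_general (N : ℕ) (hN : 1 ≤ N) (L : ℝ) (hL : 0 < L)
    (Q E : ℤ → ℝ) (a b : ℤ → ℝ) (S : ℝ → ℝ)
    (hQpos : ∀ n, 0 < Q n) (hEpos : ∀ n, 0 < E n)
    (hQper : ∀ n, Q (n + N) = Q n) (hEper : ∀ n, E (n + N) = E n)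
    (hsum : ∑ n ∈ Finset.Icc (1:ℤ) (N:ℤ), (Q n + E n) = L)
    (hhalf : ∑ n ∈ Finset.Icc (1:ℤ) (N:ℤ), Q n < L / 2)
    (hb : ∀ n, b n = a n + Q n) (ha : ∀ n, a (n + 1) = b n + E n)
    (hdown : ∀ n, ∀ x ∈ Set.Icc (a n) (b n), S x = S (a n) - (x - a n))
    (hup : ∀ n, ∀ x ∈ Set.Icc (b n) (a (n + 1)), S x = S (b n) + (x - b n)) :
    ∀ n : ℤ, b n - a n - Dfun N Q E n = pastMax S (b n) - S (b n) := by
  have hpath : IsZigzagPath Q E a b S := ⟨hQpos, hEpos, hb, ha, hdown, hup⟩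
  have hperiod_a (m : ℤ) : a (m + N) = a m + L := by
    rw [add_period_eq_add_sum_Icc hpath.a_succ_eq (Function.Periodic.add hQper hEper), ← hsum]
  have hperiod_S := add_period_eq_add_sum_Icc (f := fun m => S (a m)) hpath.S_a_succ
    (Function.Periodic.sub hEper hQper)
  have hdrift : 0 ≤ ∑ ℓ ∈ Icc (1 : ℤ) N, (E ℓ - Q ℓ) := by
    rw [sum_sub_distrib]
    rw [sum_add_distrib] at hsum
    linarith
  intro n
  rw [pastMax, (hpath.isGreatest_S_image_Iic_b hN hL hdrift hperiod_a hperiod_S n).csSup_eq,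
    hpath.S_b, hb]
  ring

theorem periodic_carrier_identity (N : ℕ) (hN : 1 ≤ N) (L : ℝ) (hL : 0 < L)
    (Q E : ℤ → ℝ) (a b : ℤ → ℝ) (S : ℝ → ℝ)
    (hQpos : ∀ n, 0 < Q n) (hEpos : ∀ n, 0 < E n)
    (hQper : ∀ n, Q (n + N) = Q n) (hEper : ∀ n, E (n + N) = E n)
    (hsum : ∑ n ∈ Finset.Icc (1:ℤ) (N:ℤ), (Q n + E n) = L)
    (hhalf : ∑ n ∈ Finset.Icc (1:ℤ) (N:ℤ), Q n < L / 2)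
    (ha1 : a 1 = 0) (hS0 : S 0 = 0)
    (hb : ∀ n, b n = a n + Q n) (ha : ∀ n, a (n + 1) = b n + E n)
    (hdown : ∀ n, ∀ x ∈ Set.Icc (a n) (b n), S x = S (a n) - (x - a n))
    (hup : ∀ n, ∀ x ∈ Set.Icc (b n) (a (n + 1)), S x = S (b n) + (x - b n)) :
    ∀ n : ℤ, b n - a n - Dfun N Q E n = pastMax S (b n) - S (b n) :=
  periodic_carrier_identity_general N hN L hL Q E a b S hQpos hEpos hQper hEper hsum hhalf hb ha
    hdown hup
end

section
/- Let L > 0, N ∈ ℕ, and let ((Q_n)_{n=1}^N, (E_n)_{n=1}^N) be positive reals with Σ(Q_n + E_n) = L and Σ Q_n < L/2. Define D_n = min_{0≤k≤N−1} Σ_{ℓ=1}^k (E_{n−ℓ} − Q_{n−ℓ}) (indices mod N), (𝒯Q)_n = min{Q_n − D_n, E_n}, (𝒯E)_n = E_n + Q_{n+1} − (𝒯Q)_n (indices mod N). Then Σ_{n=1}^N (𝒯Q)_n = Σ_{n=1}^N Q_n and Σ_{n=1}^N ((𝒯Q)_n + (𝒯E)_n) = L, and moreover (𝒯Q)_n >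 0 and (𝒯E)_n > 0 for all n. -/
open Finset Function

section PeriodicSums

theorem Finset.sum_Icc_one_eq_sum_range {M : Type*} [AddCommMonoid M] (f : ℤ → M) (N : ℕ) :
    ∑ n ∈ Icc (1 : ℤ) N, f n = ∑ i ∈ range N, f (i + 1) := by
  refine sum_nbij' (fun n => (n - 1).toNat) (fun i => (i : ℤ) + 1) ?_ ?_ ?_ ?_ ?_ <;>
    intro a ha <;> simp only [mem_Icc, mem_range] at ha ⊢
  all_goals first | omega | (congr 1; omega)

variable {M : Type*} [AddCancelCommMonoid M]

theorem Function.Periodic.sum_Icc_comp_add_one {f : ℤ → M} {N : ℕ} (hf : Periodic f N) :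
    ∑ n ∈ Icc (1 : ℤ) N, f (n + 1) = ∑ n ∈ Icc (1 : ℤ) N, f n := by
  have h := sum_range_succ (fun i : ℕ => f (i + 1)) N
  rw [sum_range_succ', add_comm (N : ℤ) 1, hf 1] at h
  simp only [sum_Icc_one_eq_sum_range]
  push_cast at h
  exact add_right_cancel h

theorem Function.Periodic.sum_Icc_comp_add {f : ℤ → M} {N : ℕ} (hf : Periodic f N) (c : ℤ) :
    ∑ n ∈ Icc (1 : ℤ) N, f (n + c) = ∑ n ∈ Icc (1 : ℤ) N, f n := by
  induction c using Int.induction_on with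
  | zero => simp
  | succ c ih =>
    simpa only [add_assoc, add_comm (1 : ℤ)] using (hf.add_const c).sum_Icc_comp_add_one.trans ih
  | pred c ih =>
    rw [← ih, ← (hf.add_const (-c - 1)).sum_Icc_comp_add_one]
    simp only [add_right_comm _ (1 : ℤ), add_assoc, sub_add_cancel]

theorem Function.Periodic.sum_Icc_comp_sub {f : ℤ → M} {N : ℕ} (hf : Periodic f N) (c : ℤ) :
    ∑ ℓ ∈ Icc (1 : ℤ) N, f (c - ℓ) = ∑ n ∈ Icc (1 : ℤ) N, f n := by
  rw [← hf.sum_Icc_comp_add (c - N - 1)]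
  refine sum_nbij' (fun ℓ => N + 1 - ℓ) (fun ℓ => N + 1 - ℓ) ?_ ?_ ?_ ?_ ?_ <;>
    intro a ha <;> simp only [mem_Icc] at ha ⊢
  all_goals first | omega | (congr 1; omega)

end PeriodicSums

section WindowSum

variable {M : Type*} [AddCommMonoid M] (g : ℤ → M)

noncomputable def windowSum (n : ℤ) (k : ℕ) : M :=
  ∑ ℓ ∈ Icc (1 : ℤ) k, g (n - ℓ)

@[simp]
theorem windowSum_zero (n : ℤ) : windowSum g n 0 = 0 := by
  simp [windowSum]

theorem windowSum_succ (n : ℤ) (k : ℕ) :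
    windowSum g (n + 1) (k + 1) = g n + windowSum g n k := by
  simp only [windowSum, sum_Icc_one_eq_sum_range, sum_range_succ']
  rw [add_comm]
  push_cast
  congr 1
  · simp
  · exact sum_congr rfl fun i _ => congr_arg g (by ring)

variable {g}

theorem Function.Periodic.windowSum_add_period {N : ℕ} (hg : Periodic g N) (n : ℤ) (k : ℕ) :
    windowSum g (n + N) k = windowSum g n k :=
  sum_congr rfl fun ℓ _ => by rw [add_sub_right_comm, hg]

end WindowSum

theorem Function.Periodic.windowSum_period {M : Type*} [AddCancelCommMonoid M] {g : ℤ → M}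
    {N : ℕ} (hg : Periodic g N) (n : ℤ) :
    windowSum g n N = ∑ m ∈ Icc (1 : ℤ) N, g m :=
  hg.sum_Icc_comp_sub n

theorem Dfun_eq_sInf_windowSum (N : ℕ) (Q E : ℤ → ℝ) (n : ℤ) :
    Dfun N Q E n = sInf (windowSum (E - Q) n '' Set.Iio N) := by
  simp only [Dfun, windowSum, Set.image, Set.mem_Iio, Pi.sub_apply, eq_comm]

section Dfun

variable {N : ℕ} {Q E : ℤ → ℝ}

theorem isLeast_Dfun_s14 (hN : 0 < N) (n : ℤ) :
    IsLeast (windowSum (E - Q) n '' Set.Iio N) (Dfun N Q E n) := by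
  have hfin := (Set.finite_Iio N).image (windowSum (E - Q) n)
  rw [Dfun_eq_sInf_windowSum]
  exact ⟨(Set.Nonempty.image _ ⟨0, hN⟩).csInf_mem hfin, fun _ hs => csInf_le hfin.bddBelow hs⟩

theorem Dfun_nonpos (hN : 0 < N) (n : ℤ) : Dfun N Q E n ≤ 0 := by
  simpa using (isLeast_Dfun_s14 hN n).2 ⟨0, hN, rfl⟩

theorem Dfun_periodic (hQ : Periodic Q N) (hE : Periodic E N) : Periodic (Dfun N Q E) N := by
  intro n
  simp only [Dfun_eq_sInf_windowSum, (hE.sub hQ).windowSum_add_period]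

theorem Dfun_add_one (hN : 0 < N) (hQ : Periodic Q N) (hE : Periodic E N)
    (hdrift : 0 < ∑ m ∈ Icc (1 : ℤ) N, (E m - Q m)) (n : ℤ) :
    Dfun N Q E (n + 1) = min 0 (E n - Q n + Dfun N Q E n) := by
  obtain ⟨⟨k, hk, hDk⟩, hlow⟩ := isLeast_Dfun_s14 (Q := Q) (E := E) hN n
  obtain ⟨⟨k', hk', hDk'⟩, hlow'⟩ := isLeast_Dfun_s14 (Q := Q) (E := E) hN (n + 1)
  apply le_antisymm
  · refine le_min (Dfun_nonpos hN _) ?_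
    rw [← hDk]
    rcases (Nat.succ_le_of_lt hk).lt_or_eq with hk1 | rfl
    · simpa [windowSum_succ] using hlow' ⟨k + 1, hk1, rfl⟩
    · have := (hE.sub hQ).windowSum_period (n + 1)
      rw [windowSum_succ] at this
      simp only [Pi.sub_apply] at this
      linarith [Dfun_nonpos (Q := Q) (E := E) hN (n + 1)]
  · rw [← hDk']
    rcases k' with _ | j
    · simp
    · rw [windowSum_succ]
      exact min_le_of_right_le (by simpa using hlow ⟨j, Nat.lt_of_succ_lt hk', rfl⟩)

end Dfun

theorem periodic_toda_preservation_general (N : ℕ) (hN : 1 ≤ N) (L : ℝ)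
    (Q E TQ TE : ℤ → ℝ)
    (hQpos : ∀ n, 0 < Q n) (hEpos : ∀ n, 0 < E n)
    (hQper : ∀ n, Q (n + N) = Q n) (hEper : ∀ n, E (n + N) = E n)
    (hsum : ∑ n ∈ Finset.Icc (1:ℤ) (N:ℤ), (Q n + E n) = L)
    (hhalf : ∑ n ∈ Finset.Icc (1:ℤ) (N:ℤ), Q n < L / 2)
    (hTQ : ∀ n, TQ n = min (Q n - Dfun N Q E n) (E n))
    (hTE : ∀ n, TE n = E n + Q (n + 1) - TQ n) :
    (∑ n ∈ Finset.Icc (1:ℤ) (N:ℤ), TQ n = ∑ n ∈ Finset.Icc (1:ℤ) (N:ℤ), Q n) ∧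
    (∑ n ∈ Finset.Icc (1:ℤ) (N:ℤ), (TQ n + TE n) = L) ∧
    (∀ n, 0 < TQ n) ∧ (∀ n, 0 < TE n) := by
  rw [sum_add_distrib] at hsum
  have hdrift : 0 < ∑ n ∈ Icc (1 : ℤ) N, (E n - Q n) := by
    rw [sum_sub_distrib]
    linarith
  have hTQ_telescope (n : ℤ) : TQ n = Q n + (Dfun N Q E (n + 1) - Dfun N Q E n) := by
    rw [hTQ, Dfun_add_one hN hQper hEper hdrift,
      show ∀ x y : ℝ, Q n + (min 0 x - y) = min 0 x + (Q n - y) by intros; ring,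
      ← min_add_add_right]
    congr 1 <;> ring
  refine ⟨?_, ?_, fun n => ?_, fun n => ?_⟩
  · simp only [hTQ_telescope, sum_add_distrib, sum_sub_distrib,
      (Dfun_periodic hQper hEper).sum_Icc_comp_add_one, sub_self, add_zero]
  · simp only [hTE, add_sub_cancel, sum_add_distrib, Periodic.sum_Icc_comp_add_one hQper]
    linarith
  · rw [hTQ]
    exact lt_min (by linarith [hQpos n, Dfun_nonpos (Q := Q) (E := E) hN n]) (hEpos n)
  · rw [hTE, hTQ]
    linarith [min_le_right (Q n - Dfun N Q E n) (E n), hQpos (n + 1)]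

theorem periodic_toda_preservation (N : ℕ) (hN : 1 ≤ N) (L : ℝ) (hL : 0 < L)
    (Q E TQ TE : ℤ → ℝ)
    (hQpos : ∀ n, 0 < Q n) (hEpos : ∀ n, 0 < E n)
    (hQper : ∀ n, Q (n + N) = Q n) (hEper : ∀ n, E (n + N) = E n)
    (hsum : ∑ n ∈ Finset.Icc (1:ℤ) (N:ℤ), (Q n + E n) = L)
    (hhalf : ∑ n ∈ Finset.Icc (1:ℤ) (N:ℤ), Q n < L / 2)
    (hTQ : ∀ n, TQ n = min (Q n - Dfun N Q E n) (E n))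
    (hTE : ∀ n, TE n = E n + Q (n + 1) - TQ n) :
    (∑ n ∈ Finset.Icc (1:ℤ) (N:ℤ), TQ n = ∑ n ∈ Finset.Icc (1:ℤ) (N:ℤ), Q n) ∧
    (∑ n ∈ Finset.Icc (1:ℤ) (N:ℤ), (TQ n + TE n) = L) ∧
    (∀ n, 0 < TQ n) ∧ (∀ n, 0 < TE n) :=
  periodic_toda_preservation_general N hN L Q E TQ TE hQpos hEpos hQper hEper hsum hhalf hTQ hTE
end

section
/- Let S : ℝ → ℝ be continuous with S(0) = 0, of locally bounded variation, and with M(x) := sup_{y≤x} S(y) finite for all x. Suppose S has only finitely many local extrema in every compact set. Then the Pitman transform TS(x) = 2M(x) − S(x) − 2M(0) has the same total variation as S on every interval [u, v] with u ≤ 0 ≤ v: ∫_u^v |d(TS)| = ∫_u^v |dS|. -/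
/-!
On a stretch where the running maximum `M` of `S` is constant, `TS = const - S`; on a stretch
where `M = S`, `TS = S - const`. Either way `TS` and `S` have the same increments up to sign,
hence the same variation. Cutting `[u, v]` at the finitely many local extrema of `S` leaves
intervals on which `S` is monotone. On an antitone piece `M` is constant; on a monotone piece
`M` is constant until `S` reaches the maximum attained before the piece, and `M = S` afterwards.
-/

open Set

section

variable {α : Type*} [LinearOrder α]

theorem eVariationOn_congr_of_edist_eq {E F : Type*} [PseudoEMetricSpace E]
    [PseudoEMetricSpace F] {f : α → E} {g : α → F} {s : Set α}
    (h : ∀ x ∈ s, ∀ y ∈ s, edist (f x) (f y) = edist (g x) (g y)) :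
    eVariationOn f s = eVariationOn g s := by
  unfold eVariationOn
  congr 1 with p : 1
  exact Finset.sum_congr rfl fun i _ => h _ (p.2.2.2 (i + 1)) _ (p.2.2.2 i)

theorem eVariationOn_Icc_add_Icc {E : Type*} [PseudoEMetricSpace E] (f : α → E) {a b c : α}
    (hab : a ≤ b) (hbc : b ≤ c) :
    eVariationOn f (Icc a b) + eVariationOn f (Icc b c) = eVariationOn f (Icc a c) := by
  simpa only [univ_inter] using eVariationOn.Icc_add_Icc f hab hbc (mem_univ b)

theorem Set.Finite.le_induction_of_glue {P : α → α → Prop} {s : Set α} (hs : s.Finite)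
    (base : ∀ a b, a ≤ b → Disjoint (Ioo a b) s → P a b)
    (glue : ∀ a c b, a ≤ c → c ≤ b → P a c → P c b → P a b)
    {a b : α} (hab : a ≤ b) : P a b := by
  induction s, hs using Set.Finite.induction_on generalizing a b with
  | empty => exact base a b hab (disjoint_empty _)
  | @insert x t _ _ ih =>
    refine ih (fun a b hab hdisj => ?_) hab
    by_cases hx : x ∈ Ioo a b
    · have hleft : Disjoint (Ioo a x) (insert x t) :=
        disjoint_insert_right.2 ⟨fun h => h.2.false,
          hdisj.mono_left (Ioo_subset_Ioo_right hx.2.le)⟩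
      have hright : Disjoint (Ioo x b) (insert x t) :=
        disjoint_insert_right.2 ⟨fun h => h.1.false,
          hdisj.mono_left (Ioo_subset_Ioo_left hx.1.le)⟩
      exact glue a x b hx.1.le hx.2.le (base a x hx.1.le hleft) (base x b hx.2.le hright)
    · exact base a b hab (disjoint_insert_right.2 ⟨hx, hdisj⟩)

end

theorem monotoneOn_or_antitoneOn_of_forall_not_isLocalExtr {f : ℝ → ℝ} {a b : ℝ}
    (hab : a ≤ b) (hf : ContinuousOn f (Icc a b)) (h : ∀ x ∈ Ioo a b, ¬IsLocalExtr f x) :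
    MonotoneOn f (Icc a b) ∨ AntitoneOn f (Icc a b) := by
  have hinj : InjOn f (Icc a b) := by
    intro x hx y hy hxy
    by_contra hne
    wlog hlt : x < y generalizing x y
    · exact this hy hx hxy.symm (Ne.symm hne) (lt_of_le_of_ne (not_lt.1 hlt) (Ne.symm hne))
    obtain ⟨c, hc, hextr⟩ :=
      exists_isLocalExtr_Ioo hlt (hf.mono (Icc_subset_Icc hx.1 hy.2)) hxy
    exact h c ⟨hx.1.trans_lt hc.1, hc.2.trans_le hy.2⟩ hextr
  exact (hf.strictMonoOn_of_injOn_Icc' hab hinj).imp StrictMonoOn.monotoneOn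
    StrictAntiOn.antitoneOn

namespace Pitman

variable {S : ℝ → ℝ}

theorem le_pastMax {x : ℝ} (hB : BddAbove (S '' Iic x)) : S x ≤ pastMax S x :=
  le_csSup hB (mem_image_of_mem _ self_mem_Iic)

theorem pastMax_eq_max {a x : ℝ} (hB : BddAbove (S '' Iic x)) (hax : a ≤ x) :
    pastMax S x = max (pastMax S a) (sSup (S '' Icc a x)) := by
  rw [pastMax, pastMax, ← Iic_union_Icc_eq_Iic hax, image_union,
    csSup_union (hB.mono (image_mono (Iic_subset_Iic.2 hax))) (Nonempty.image _ nonempty_Iic)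
      (hB.mono (image_mono Icc_subset_Iic_self)) ((nonempty_Icc.2 hax).image _)]

theorem pastMax_eq_max_of_monotoneOn {a x : ℝ} (hB : BddAbove (S '' Iic x)) (hax : a ≤ x)
    (hS : MonotoneOn S (Icc a x)) : pastMax S x = max (pastMax S a) (S x) := by
  rw [pastMax_eq_max hB hax, (hS.map_isGreatest (isGreatest_Icc hax)).csSup_eq]

theorem pastMax_eq_of_antitoneOn {a x : ℝ} (hB : ∀ x, BddAbove (S '' Iic x)) (hax : a ≤ x)
    (hS : AntitoneOn S (Icc a x)) : pastMax S x = pastMax S a := by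
  rw [pastMax_eq_max (hB x) hax, (hS.map_isLeast (isLeast_Icc hax)).csSup_eq,
    max_eq_left (le_pastMax (hB a))]

theorem eVariationOn_pitman_of_pastMax_eq_const {s : Set ℝ} {m : ℝ}
    (h : ∀ x ∈ s, pastMax S x = m) : eVariationOn (pitman S) s = eVariationOn S s := by
  refine eVariationOn_congr_of_edist_eq fun x hx y hy => ?_
  simp only [pitman, h x hx, h y hy, edist_dist, Real.dist_eq]
  rw [← abs_neg]
  ring_nf

theorem eVariationOn_pitman_of_eqOn_pastMax {s : Set ℝ} (h : EqOn (pastMax S) S s) :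
    eVariationOn (pitman S) s = eVariationOn S s := by
  refine eVariationOn_congr_of_edist_eq fun x hx y hy => ?_
  simp only [pitman, h hx, h hy, edist_dist, Real.dist_eq]
  ring_nf

theorem eVariationOn_pitman_Icc_of_monotoneOn (hB : ∀ x, BddAbove (S '' Iic x)) {a b : ℝ}
    (hab : a ≤ b) (hcont : ContinuousOn S (Icc a b)) (hS : MonotoneOn S (Icc a b)) :
    eVariationOn (pitman S) (Icc a b) = eVariationOn S (Icc a b) := by
  have hM : ∀ x ∈ Icc a b, pastMax S x = max (pastMax S a) (S x) := fun x hx =>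
    pastMax_eq_max_of_monotoneOn (hB x) hx.1 (hS.mono (Icc_subset_Icc_right hx.2))
  rcases le_total (S b) (pastMax S a) with hb | hb
  · refine eVariationOn_pitman_of_pastMax_eq_const (m := pastMax S a) fun x hx => ?_
    rw [hM x hx, max_eq_left ((hS hx (right_mem_Icc.2 hab) hx.2).trans hb)]
  -- `c` is where `S` catches up with its maximum before `a`
  obtain ⟨c, ⟨hac, hcb⟩, hSc⟩ :=
    intermediate_value_Icc hab hcont ⟨le_pastMax (hB a), hb⟩
  rw [← eVariationOn_Icc_add_Icc _ hac hcb, ← eVariationOn_Icc_add_Icc _ hac hcb]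
  congr 1
  · refine eVariationOn_pitman_of_pastMax_eq_const (m := pastMax S a) fun x hx => ?_
    rw [hM x ⟨hx.1, hx.2.trans hcb⟩,
      max_eq_left (hSc ▸ hS ⟨hx.1, hx.2.trans hcb⟩ ⟨hac, hcb⟩ hx.2)]
  · refine eVariationOn_pitman_of_eqOn_pastMax fun x hx => ?_
    rw [hM x ⟨hac.trans hx.1, hx.2⟩,
      max_eq_right (hSc ▸ hS ⟨hac, hcb⟩ ⟨hac.trans hx.1, hx.2⟩ hx.1)]

theorem eVariationOn_pitman_Icc_of_antitoneOn (hB : ∀ x, BddAbove (S '' Iic x)) {a b : ℝ}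
    (hS : AntitoneOn S (Icc a b)) :
    eVariationOn (pitman S) (Icc a b) = eVariationOn S (Icc a b) :=
  eVariationOn_pitman_of_pastMax_eq_const fun _ hx =>
    pastMax_eq_of_antitoneOn hB hx.1 (hS.mono (Icc_subset_Icc_right hx.2))

theorem eVariationOn_pitman_Icc_of_forall_not_isLocalExtr (hS : Continuous S)
    (hB : ∀ x, BddAbove (S '' Iic x)) {a b : ℝ} (hab : a ≤ b)
    (h : ∀ x ∈ Ioo a b, ¬IsLocalExtr S x) :
    eVariationOn (pitman S) (Icc a b) = eVariationOn S (Icc a b) := by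
  rcases monotoneOn_or_antitoneOn_of_forall_not_isLocalExtr hab hS.continuousOn h with hm | ha
  · exact eVariationOn_pitman_Icc_of_monotoneOn hB hab hS.continuousOn hm
  · exact eVariationOn_pitman_Icc_of_antitoneOn hB ha

end Pitman

open Pitman in
theorem pitman_preserves_variation_general (S : ℝ → ℝ) (hS : Continuous S)
    (hB : ∀ x : ℝ, BddAbove (S '' Set.Iic x))
    (hext : ∀ u v : ℝ, {x | x ∈ Set.Icc u v ∧ IsLocalExtr S x}.Finite) :
    ∀ u v : ℝ, u ≤ 0 → 0 ≤ v →
      eVariationOn (pitman S) (Set.Icc u v) = eVariationOn S (Set.Icc u v) := by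
  intro u v hu hv
  refine (hext u v).le_induction_of_glue
    (P := fun a b => u ≤ a → b ≤ v →
      eVariationOn (pitman S) (Icc a b) = eVariationOn S (Icc a b))
    (fun a b hab hdisj hua hbv => ?_) (fun a c b hac hcb hP₁ hP₂ hua hbv => ?_)
    (hu.trans hv) le_rfl le_rfl
  · refine eVariationOn_pitman_Icc_of_forall_not_isLocalExtr hS hB hab fun x hx hextr => ?_
    exact hdisj.ne_of_mem hx ⟨⟨hua.trans hx.1.le, hx.2.le.trans hbv⟩, hextr⟩ rfl
  · rw [← eVariationOn_Icc_add_Icc _ hac hcb, ← eVariationOn_Icc_add_Icc _ hac hcb,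
      hP₁ hua (hcb.trans hbv), hP₂ (hua.trans hac) hbv]

theorem pitman_preserves_variation (S : ℝ → ℝ) (hS : Continuous S) (h0 : S 0 = 0)
    (hB : ∀ x : ℝ, BddAbove (S '' Set.Iic x))
    (hBV : LocallyBoundedVariationOn S Set.univ)
    (hext : ∀ u v : ℝ, {x | x ∈ Set.Icc u v ∧ IsLocalExtr S x}.Finite) :
    ∀ u v : ℝ, u ≤ 0 → 0 ≤ v →
      eVariationOn (pitman S) (Set.Icc u v) = eVariationOn S (Set.Icc u v) :=
  pitman_preserves_variation_general S hS hB hext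
end

section
/- Let S : ℝ → ℝ be continuous with S(0) = 0, strictly increasing on (−∞, a_1) and on (b_1, ∞), and strictly decreasing on (a_1, b_1), where 0 ≤ a_1 < b_1. Then the Pitman transform TS(x) = 2M(x) − S(x) − 2M(0) (where M(x) = sup_{y≤x} S(y)) is strictly increasing on (−∞, b_1), and there exists ε > 0 such that TS is strictly decreasing on (b_1, b_1 + ε). In particular the first local maximum of TS on [0,∞) is at b_1. -/
open Set Filter Topology

section RunningMax

variable {S : ℝ → ℝ} {a x : ℝ}

theorem pastMax_eq_of_forall_le (hax : a ≤ x) (h : ∀ y ≤ x, S y ≤ S a) : pastMax S x = S a :=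
  IsGreatest.csSup_eq ⟨mem_image_of_mem S hax, by rintro _ ⟨y, hy, rfl⟩; exact h y hy⟩

theorem pastMax_eq_self_of_monotoneOn (hS : MonotoneOn S (Iic a)) (hx : x ≤ a) :
    pastMax S x = S x :=
  pastMax_eq_of_forall_le le_rfl fun _ hy ↦ hS (hy.trans hx) hx hy

theorem pastMax_eq_of_monotoneOn_of_le (hS : MonotoneOn S (Iic a)) (hax : a ≤ x)
    (h : ∀ y ∈ Icc a x, S y ≤ S a) : pastMax S x = S a := by
  refine pastMax_eq_of_forall_le hax fun y hy ↦ ?_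
  rcases le_total y a with hya | hay
  · exact hS hya self_mem_Iic hya
  · exact h y ⟨hay, hy⟩

theorem pitman_eq_of_monotoneOn (hS : MonotoneOn S (Iic a)) (ha : 0 ≤ a) (hx : x ≤ a) :
    pitman S x = S x - 2 * S 0 := by
  rw [pitman, pastMax_eq_self_of_monotoneOn hS hx, pastMax_eq_self_of_monotoneOn hS ha]
  ring

theorem pitman_eq_two_mul_sub_of_monotoneOn (hS : MonotoneOn S (Iic a)) (ha : 0 ≤ a) (hax : a ≤ x)
    (h : ∀ y ∈ Icc a x, S y ≤ S a) : pitman S x = 2 * S a - S x - 2 * S 0 := by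
  rw [pitman, pastMax_eq_of_monotoneOn_of_le hS hax h, pastMax_eq_self_of_monotoneOn hS ha]

end RunningMax

theorem ContinuousAt.exists_forall_Icc_lt {f : ℝ → ℝ} {b c : ℝ} (hf : ContinuousAt f b)
    (hb : f b < c) : ∃ ε > 0, ∀ y ∈ Icc b (b + ε), f y < c := by
  have hev : ∀ᶠ y in 𝓝[≥] b, f y < c :=
    nhdsWithin_le_nhds (hf.eventually_lt continuousAt_const hb)
  obtain ⟨u, hbu, hu⟩ := mem_nhdsGE_iff_exists_Icc_subset.1 hev
  exact ⟨u - b, sub_pos.2 hbu, by rwa [add_sub_cancel]⟩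

theorem pitman_one_soliton (S : ℝ → ℝ) (hS : Continuous S) (h0 : S 0 = 0)
    (a₁ b₁ : ℝ) (ha₁ : 0 ≤ a₁) (hab : a₁ < b₁)
    (hinc₁ : StrictMonoOn S (Set.Iic a₁))
    (hdec : StrictAntiOn S (Set.Icc a₁ b₁))
    (hinc₂ : StrictMonoOn S (Set.Ici b₁)) :
    StrictMonoOn (pitman S) (Set.Iic b₁) ∧
    (∃ ε > 0, StrictAntiOn (pitman S) (Set.Icc b₁ (b₁ + ε))) ∧
    IsLocalMax (pitman S) b₁ := by
  obtain ⟨ε, hε, hbelow⟩ := hS.continuousAt.exists_forall_Icc_lt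
    (hdec (left_mem_Icc.2 hab.le) (right_mem_Icc.2 hab.le) hab)
  have hmax : ∀ y ∈ Icc a₁ (b₁ + ε), S y ≤ S a₁ := fun y hy ↦ by
    rcases le_total y b₁ with hyb | hby
    · exact hdec.antitoneOn (left_mem_Icc.2 hab.le) ⟨hy.1, hyb⟩ hy.1
    · exact (hbelow y ⟨hby, hy.2⟩).le
  have hpit₁ : EqOn S (pitman S) (Iic a₁) := fun x hx ↦ by
    rw [pitman_eq_of_monotoneOn hinc₁.monotoneOn ha₁ hx, h0, mul_zero, sub_zero]
  have hpit₂ : EqOn (fun x ↦ 2 * S a₁ - S x) (pitman S) (Icc a₁ (b₁ + ε)) := fun x hx ↦ by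
    rw [pitman_eq_two_mul_sub_of_monotoneOn hinc₁.monotoneOn ha₁ hx.1
      fun y hy ↦ hmax y ⟨hy.1, hy.2.trans hx.2⟩, h0, mul_zero, sub_zero]
  have hreflect : StrictMonoOn (fun x ↦ 2 * S a₁ - S x) (Icc a₁ b₁) :=
    fun x hx y hy hxy ↦ sub_lt_sub_left (hdec hx hy hxy) _
  have mono : StrictMonoOn (pitman S) (Iic b₁) := by
    rw [← Iic_union_Icc_eq_Iic hab.le]
    exact (hinc₁.congr hpit₁).union
      (hreflect.congr (hpit₂.mono (Icc_subset_Icc_right (by linarith))))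
      isGreatest_Iic (isLeast_Icc hab.le)
  have anti : StrictAntiOn (pitman S) (Icc b₁ (b₁ + ε)) :=
    StrictAntiOn.congr (fun x hx y hy hxy ↦ sub_lt_sub_left (hinc₂ hx.1 hy.1 hxy) _)
      (hpit₂.mono (Icc_subset_Icc_left hab.le))
  exact ⟨mono, ⟨ε, hε, anti⟩, isLocalMax_of_mono_anti' self_mem_nhdsWithin
    (Icc_mem_nhdsGE (by linarith)) mono.monotoneOn anti.antitoneOn⟩
end
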